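/- If Z and Z' are skew-symmetric matrices that are totally nonnegative Pfaffians, then the block diagonal skew-symmetric matrix Ω = diag(Z, Z') is a totally nonnegative Pfaffian. -/

import Mathlib

open Matrix

/-- The Pfaffian of an `N × N` matrix, via the Laplace-type expansion along the first row.
For odd `N` it is `0`, matching the convention that only even-sized skew-symmetric matrices
have a (possibly nonzero) Pfaffian. -/
noncomputable def pf (R : Type*) [CommRing R] : (N : ℕ) → Matrix (Fin N) (Fin N) R → R
  | 0, _ => 1
  | 1, _ => 0
  | (N+2), A => ∑ j : Fin (N+1), (-1 : R)^(j:ℕ) * A 0 j.succ *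
      pf R N (fun a b => A ((j.succAbove a).succ) ((j.succAbove b).succ))

/-- A skew-symmetric real matrix is a *totally nonnegative Pfaffian* if every even-size
principal submatrix has nonnegative Pfaffian. -/
noncomputable def IsTNNPfaffian {N : ℕ} (A : Matrix (Fin N) (Fin N) ℝ) : Prop :=
  ∀ α : Finset (Fin N), Even α.card →
    0 ≤ pf ℝ α.card (A.submatrix (α.orderEmbOfFin rfl) (α.orderEmbOfFin rfl))

/-- A real matrix is *totally nonnegative* if all its minors are nonnegative. -/
def IsTotallyNonneg {n m : ℕ} (L : Matrix (Fin n) (Fin m) ℝ) : Prop :=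
  ∀ (k : ℕ) (f : Fin k → Fin n) (g : Fin k → Fin m), StrictMono f → StrictMono g →
    0 ≤ (L.submatrix f g).det

/-! The principal submatrix of `diag(Z, Z')` on an index set `α` is `diag(Z[α₁], Z'[α₂])`,
where `α₁` and `α₂` are the parts of `α` lying in the two blocks. The Pfaffian is multiplicative
on block diagonal matrices: expanding along the first row, the entries outside the first block
vanish and every remaining minor is again block diagonal. If `|α|` is even, either `|α₁|` and
`|α₂|` are both even, and both factors are nonnegative, or `|α₁|` is odd and `Pf Z[α₁] = 0`. -/

namespace Fin

lemma val_succAbove {n : ℕ} (p : Fin (n + 1)) (i : Fin n) :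
    (p.succAbove i : ℕ) = if (i : ℕ) < p then (i : ℕ) else (i : ℕ) + 1 := by
  unfold succAbove
  split_ifs <;> simp_all [lt_def]

lemma strictMono_append {α : Type*} [Preorder α] {m n : ℕ} {u : Fin m → α} {v : Fin n → α}
    (hu : StrictMono u) (hv : StrictMono v) (huv : ∀ i j, u i < v j) :
    StrictMono (Fin.append u v) := by
  intro i k hik
  induction i using Fin.addCases with
  | left i =>
    induction k using Fin.addCases with
    | left k => simpa using hu (by rw [Fin.lt_def] at hik ⊢; simpa using hik)
    | right k => simpa using huv i k
  | right i =>
    induction k using Fin.addCases with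
    | left k => exact absurd hik (by simp [Fin.lt_def]; omega)
    | right k => simpa using hv ((Fin.natAdd_lt_natAdd_iff m).mp hik)

end Fin

section

variable {R : Type*} [CommRing R]

lemma pf_submatrix_cast {m n : ℕ} (h : m = n) (A : Matrix (Fin n) (Fin n) R) :
    pf R m (A.submatrix (Fin.cast h) (Fin.cast h)) = pf R n A := by
  subst h; rfl

lemma pf_add_two {N : ℕ} (A : Matrix (Fin (N + 2)) (Fin (N + 2)) R) :
    pf R (N + 2) A = ∑ j : Fin (N + 1), (-1 : R) ^ (j : ℕ) * A 0 j.succ *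
      pf R N (A.submatrix (Fin.succ ∘ j.succAbove) (Fin.succ ∘ j.succAbove)) := rfl

lemma pf_eq_zero_of_odd : ∀ {n : ℕ}, Odd n → ∀ A : Matrix (Fin n) (Fin n) R, pf R n A = 0
  | 0, h, _ => absurd h (by decide)
  | 1, _, _ => rfl
  | n + 2, h, A => by
    rw [pf_add_two]
    refine Finset.sum_eq_zero fun j _ => ?_
    rw [pf_eq_zero_of_odd (by simpa [Nat.odd_add] using h), mul_zero]

def finBlockDiag {m n : ℕ} (Z : Matrix (Fin m) (Fin m) R) (Z' : Matrix (Fin n) (Fin n) R) :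
    Matrix (Fin (m + n)) (Fin (m + n)) R :=
  (fromBlocks Z 0 0 Z').submatrix finSumFinEquiv.symm finSumFinEquiv.symm

section finBlockDiag

variable {m n : ℕ} (Z : Matrix (Fin m) (Fin m) R) (Z' : Matrix (Fin n) (Fin n) R)

@[simp] lemma finBlockDiag_castAdd_castAdd (i k : Fin m) :
    finBlockDiag Z Z' (Fin.castAdd n i) (Fin.castAdd n k) = Z i k := by
  simp [finBlockDiag]

@[simp] lemma finBlockDiag_castAdd_natAdd (i : Fin m) (k : Fin n) :
    finBlockDiag Z Z' (Fin.castAdd n i) (Fin.natAdd m k) = 0 := by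
  simp [finBlockDiag]

@[simp] lemma finBlockDiag_natAdd_castAdd (i : Fin n) (k : Fin m) :
    finBlockDiag Z Z' (Fin.natAdd m i) (Fin.castAdd n k) = 0 := by
  simp [finBlockDiag]

@[simp] lemma finBlockDiag_natAdd_natAdd (i k : Fin n) :
    finBlockDiag Z Z' (Fin.natAdd m i) (Fin.natAdd m k) = Z' i k := by
  simp [finBlockDiag]

lemma finBlockDiag_submatrix {a b : ℕ} {σ : Fin (a + b) → Fin (m + n)} {f : Fin a → Fin m}
    {g : Fin b → Fin n} (hf : ∀ i, σ (Fin.castAdd b i) = Fin.castAdd n (f i))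
    (hg : ∀ j, σ (Fin.natAdd a j) = Fin.natAdd m (g j)) :
    (finBlockDiag Z Z').submatrix σ σ = finBlockDiag (Z.submatrix f f) (Z'.submatrix g g) := by
  ext i k
  induction i using Fin.addCases <;> induction k using Fin.addCases <;> simp [hf, hg]

end finBlockDiag

lemma finBlockDiag_zero_left {n : ℕ} (Z : Matrix (Fin 0) (Fin 0) R)
    (Z' : Matrix (Fin n) (Fin n) R) :
    finBlockDiag Z Z' = Z'.submatrix (Fin.cast (zero_add n)) (Fin.cast (zero_add n)) := by
  ext i k
  induction i using Fin.addCases with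
  | left i => exact i.elim0
  | right i =>
    induction k using Fin.addCases with
    | left k => exact k.elim0
    | right k =>
      rw [finBlockDiag_natAdd_natAdd, submatrix_apply]
      congr 1 <;> exact Fin.ext (by simp)

theorem pf_finBlockDiag : ∀ {m : ℕ} (Z : Matrix (Fin m) (Fin m) R) {n : ℕ}
    (Z' : Matrix (Fin n) (Fin n) R), pf R (m + n) (finBlockDiag Z Z') = pf R m Z * pf R n Z'
  | 0, Z, n, Z' => by
    rw [finBlockDiag_zero_left, pf_submatrix_cast]
    exact (one_mul _).symm
  | 1, _, 0, _ => (zero_mul _).symm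
  | 1, Z, n + 1, Z' => by
    have h : n + 2 = 1 + (n + 1) := by omega
    rw [← pf_submatrix_cast h, pf_add_two, Finset.sum_eq_zero]
    · exact (zero_mul _).symm
    intro j _
    have h0 : Fin.cast h 0 = Fin.castAdd (n + 1) 0 := rfl
    have hj : Fin.cast h j.succ = Fin.natAdd 1 j := Fin.ext (by simp; omega)
    simp [h0, hj]
  | m + 2, Z, n, Z' => by
    have h : m + n + 2 = m + 2 + n := by omega
    have h' : m + 1 + n = m + n + 1 := by omega
    have h0 : Fin.cast h 0 = Fin.castAdd n 0 := rfl
    have hrow (j : Fin (m + 1)) :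
        finBlockDiag Z Z' (Fin.cast h 0) (Fin.cast h (Fin.cast h' (Fin.castAdd n j)).succ) =
          Z 0 j.succ := by
      have hj : Fin.cast h (Fin.cast h' (Fin.castAdd n j)).succ = Fin.castAdd n j.succ := rfl
      rw [h0, hj, finBlockDiag_castAdd_castAdd]
    have hrow_zero (q : Fin n) :
        finBlockDiag Z Z' (Fin.cast h 0) (Fin.cast h (Fin.cast h' (Fin.natAdd (m + 1) q)).succ) =
          0 := by
      have hq : Fin.cast h (Fin.cast h' (Fin.natAdd (m + 1) q)).succ = Fin.natAdd (m + 2) q :=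
        Fin.ext (by simp; omega)
      rw [h0, hq, finBlockDiag_castAdd_natAdd]
    have hminor (j : Fin (m + 1)) :
        (finBlockDiag Z Z').submatrix
            (Fin.cast h ∘ Fin.succ ∘ (Fin.cast h' (Fin.castAdd n j)).succAbove)
            (Fin.cast h ∘ Fin.succ ∘ (Fin.cast h' (Fin.castAdd n j)).succAbove) =
          finBlockDiag (Z.submatrix (Fin.succ ∘ j.succAbove) (Fin.succ ∘ j.succAbove)) Z' := by
      refine finBlockDiag_submatrix Z Z' (fun i => Fin.ext ?_) (fun q => Fin.ext ?_)
      all_goals simp only [Function.comp_apply, Fin.val_cast, Fin.val_succ, Fin.val_castAdd,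
        Fin.val_natAdd, Fin.val_succAbove]
      all_goals split_ifs <;> omega
    rw [← pf_submatrix_cast h, pf_add_two, pf_add_two, Finset.sum_mul, ← Fin.sum_congr' _ h',
      Fin.sum_univ_add]
    simp only [submatrix_apply, submatrix_submatrix, hrow_zero, mul_zero, zero_mul,
      Finset.sum_const_zero, add_zero, hrow, hminor, pf_finBlockDiag, Fin.val_cast,
      Fin.val_castAdd]
    refine Finset.sum_congr rfl fun j _ => ?_
    ring

end

namespace Finset

variable {m n : ℕ} (s : Finset (Fin (m + n)))

noncomputable def finSumLeft : Finset (Fin m) :=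
  s.preimage (Fin.castAdd n) (Fin.castAdd_injective _ _).injOn

noncomputable def finSumRight : Finset (Fin n) :=
  s.preimage (Fin.natAdd m) (Fin.natAdd_injective _ _).injOn

@[simp] lemma mem_finSumLeft {i : Fin m} : i ∈ s.finSumLeft ↔ Fin.castAdd n i ∈ s := mem_preimage

@[simp] lemma mem_finSumRight {i : Fin n} : i ∈ s.finSumRight ↔ Fin.natAdd m i ∈ s := mem_preimage

lemma card_eq_card_finSumLeft_add_card_finSumRight :
    s.card = s.finSumLeft.card + s.finSumRight.card := by
  have hsplit : s.map finSumFinEquiv.symm.toEmbedding = s.finSumLeft.disjSum s.finSumRight := by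
    ext x
    cases x <;> simp
  rw [← card_disjSum, ← hsplit, card_map]

lemma coe_orderEmbOfFin_eq_append :
    ⇑(s.orderEmbOfFin s.card_eq_card_finSumLeft_add_card_finSumRight) =
      Fin.append (Fin.castAdd n ∘ s.finSumLeft.orderEmbOfFin rfl)
        (Fin.natAdd m ∘ s.finSumRight.orderEmbOfFin rfl) := by
  refine (orderEmbOfFin_unique _ (fun i => ?_) ?_).symm
  · induction i using Fin.addCases with
    | left i =>
      rw [Fin.append_left]
      exact s.mem_finSumLeft.mp (s.finSumLeft.orderEmbOfFin_mem rfl i)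
    | right i =>
      rw [Fin.append_right]
      exact s.mem_finSumRight.mp (s.finSumRight.orderEmbOfFin_mem rfl i)
  · refine Fin.strictMono_append
      ((Fin.strictMono_castAdd n).comp (orderEmbOfFin _ rfl).strictMono)
      ((Fin.strictMono_natAdd m).comp (orderEmbOfFin _ rfl).strictMono) fun i j => ?_
    simp [Fin.lt_def]
    omega

lemma orderEmbOfFin_castAdd (i : Fin s.finSumLeft.card) :
    s.orderEmbOfFin s.card_eq_card_finSumLeft_add_card_finSumRight
        (Fin.castAdd s.finSumRight.card i) =
      Fin.castAdd n (s.finSumLeft.orderEmbOfFin rfl i) := by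
  rw [coe_orderEmbOfFin_eq_append, Fin.append_left]
  rfl

lemma orderEmbOfFin_natAdd (i : Fin s.finSumRight.card) :
    s.orderEmbOfFin s.card_eq_card_finSumLeft_add_card_finSumRight
        (Fin.natAdd s.finSumLeft.card i) =
      Fin.natAdd m (s.finSumRight.orderEmbOfFin rfl i) := by
  rw [coe_orderEmbOfFin_eq_append, Fin.append_right]
  rfl

end Finset

lemma pf_submatrix_orderEmbOfFin_congr {R : Type*} [CommRing R] {N k : ℕ}
    (A : Matrix (Fin N) (Fin N) R) (s : Finset (Fin N)) (h : s.card = k) :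
    pf R k (A.submatrix (s.orderEmbOfFin h) (s.orderEmbOfFin h)) =
      pf R s.card (A.submatrix (s.orderEmbOfFin rfl) (s.orderEmbOfFin rfl)) := by
  subst h; rfl

theorem tnnPfaffian_blockDiag_general (N N' : ℕ)
    (Z : Matrix (Fin N) (Fin N) ℝ) (hZtnn : IsTNNPfaffian Z)
    (Z' : Matrix (Fin N') (Fin N') ℝ) (hZ'tnn : IsTNNPfaffian Z') :
    IsTNNPfaffian ((Matrix.fromBlocks Z 0 0 Z').submatrix
      finSumFinEquiv.symm finSumFinEquiv.symm) := by
  show IsTNNPfaffian (finBlockDiag Z Z')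
  intro α hα
  have hcard := α.card_eq_card_finSumLeft_add_card_finSumRight
  rw [← pf_submatrix_orderEmbOfFin_congr _ α hcard,
    finBlockDiag_submatrix Z Z' α.orderEmbOfFin_castAdd α.orderEmbOfFin_natAdd, pf_finBlockDiag]
  rw [hcard, Nat.even_add] at hα
  obtain heven | hodd := Nat.even_or_odd α.finSumLeft.card
  · exact mul_nonneg (hZtnn _ heven) (hZ'tnn _ (hα.mp heven))
  · rw [pf_eq_zero_of_odd hodd, zero_mul]

/-- If skew-symmetric matrices `Z` and `Z'` are totally nonnegative Pfaffians, then so is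
the block diagonal skew-symmetric matrix `Ω = diag(Z, Z')`. -/
theorem tnnPfaffian_blockDiag (N N' : ℕ)
    (Z : Matrix (Fin N) (Fin N) ℝ) (hZ : Zᵀ = -Z) (hZtnn : IsTNNPfaffian Z)
    (Z' : Matrix (Fin N') (Fin N') ℝ) (hZ' : Z'ᵀ = -Z') (hZ'tnn : IsTNNPfaffian Z') :
    IsTNNPfaffian ((Matrix.fromBlocks Z 0 0 Z').submatrix
      finSumFinEquiv.symm finSumFinEquiv.symm) :=
  tnnPfaffian_blockDiag_general N N' Z hZtnn Z' hZ'tnn
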